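/- Let p_n = Σ_{i=0}^{3n−1} (−2)^i C(i+n−1, n−1) C(6n−2−i, 3n−1) for n ≥ 1. Then p_n satisfies the recursion h''_{n} p_{n+2} = h'_{n} p_{n+1} + h_{n} p_{n}, where h''_n = 729 n(1+n)(1+3n)(2+3n)(4+3n)(5+3n)(148+870n+1247n²), h'_n = 48 n(1+3n)(2+3n)(64845+611964n+2158381n²+3177680n³+2083331n⁴+496306n⁵), and h_n = 448(−1+7n)(1+7n)(2+7n)(3+7n)(4+7n)(5+7n)(2265+3364n+1247n²). -/

import Mathlib

/-!
Creative telescoping. Let `F n i` be the summand of `p_n` and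
`B n i = (-2)^i C(i+n-1, n-1) C(6n-2-i, 3n-7)`. For `n ≥ 3` and `i ≤ 3n+5`, each of
`F n i`, `F (n+1) i`, `F (n+2) i` is `B n i` times a polynomial in `n, i`, divided by a polynomial
in `n` alone. With the polynomial certificate `R` produced by Zeilberger's algorithm,
`G n i = R(n, i) i (6n-1-i) B n i` satisfies
`d_n (h''_n F (n+2) i - h'_n F (n+1) i - h_n F n i) = G n (i+1) - G n i`
for an explicit `d_n ≠ 0`; after dividing by `B n i` this is a polynomial identity. Summing over
`i < 3n+6` telescopes to `G n (3n+6) - G n 0 = 0`, and both ends vanish. The cases `n ≤ 2` are a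
direct computation.
-/

open Finset

/-- `p_n = Σ_{i=0}^{3n−1} (−2)^i C(i+n−1, n−1) C(6n−2−i, 3n−1)`. -/
def pSeq (n : ℕ) : ℤ :=
  ∑ i ∈ range (3 * n), (-2 : ℤ) ^ i *
    (Nat.choose (i + n - 1) (n - 1) : ℤ) * (Nat.choose (6 * n - 2 - i) (3 * n - 1) : ℤ)

theorem Nat.cast_choose_add_add_mul_prod {R : Type*} [CommSemiring R] (a b s : ℕ) :
    ((a + s).choose (b + s) : R) * ∏ t ∈ range s, ((b : R) + 1 + t) =
      (a.choose b : R) * ∏ t ∈ range s, ((a : R) + 1 + t) := by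
  induction s with
  | zero => simp
  | succ s ih =>
    have step := congrArg (Nat.cast : ℕ → R) (Nat.add_one_mul_choose_eq (a + s) (b + s))
    push_cast at step
    rw [prod_range_succ, prod_range_succ, ← add_assoc, ← add_assoc]
    calc ((a + s + 1).choose (b + s + 1) : R) * ((∏ t ∈ range s, ((b : R) + 1 + t)) * (b + 1 + s))
        = (a + s + 1).choose (b + s + 1) * (b + s + 1) * ∏ t ∈ range s, ((b : R) + 1 + t) := by
          ring
      _ = (a + 1 + s) * ((a + s).choose (b + s) * ∏ t ∈ range s, ((b : R) + 1 + t)) := by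
        rw [← step]; ring
      _ = a.choose b * ((∏ t ∈ range s, ((a : R) + 1 + t)) * (a + 1 + s)) := by rw [ih]; ring

theorem Nat.cast_choose_succ_right_mul {R : Type*} [CommRing R] (a k : ℕ) :
    (a.choose (k + 1) : R) * (k + 1) = (a.choose k : R) * (a - k) := by
  rcases le_or_gt k a with hk | hk
  · have := congrArg (Nat.cast : ℕ → R) (Nat.choose_succ_right_eq a k)
    push_cast [Nat.cast_sub hk] at this
    exact this
  · simp [Nat.choose_eq_zero_of_lt hk, Nat.choose_eq_zero_of_lt (hk.trans k.lt_succ_self)]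

theorem Nat.cast_choose_add_mul_prod {R : Type*} [CommRing R] (a b s : ℕ) :
    (a.choose (b + s) : R) * ∏ t ∈ range s, ((b : R) + 1 + t) =
      (a.choose b : R) * ∏ t ∈ range s, ((a : R) - b - t) := by
  induction s with
  | zero => simp
  | succ s ih =>
    have step := Nat.cast_choose_succ_right_mul (R := R) a (b + s)
    push_cast at step
    rw [prod_range_succ, prod_range_succ, ← add_assoc]
    linear_combination (∏ t ∈ range s, ((b : R) + 1 + t)) * step + ((a : R) - b - s) * ih

def pSeqTerm (n i : ℕ) : ℤ :=
  (-2 : ℤ) ^ i * ((i + n - 1).choose (n - 1) : ℤ) * ((6 * n - 2 - i).choose (3 * n - 1) : ℤ)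

theorem pSeqTerm_eq_zero {n i : ℕ} (hn : 1 ≤ n) (hi : 3 * n ≤ i) : pSeqTerm n i = 0 := by
  simp [pSeqTerm, Nat.choose_eq_zero_of_lt (show 6 * n - 2 - i < 3 * n - 1 by omega)]

theorem pSeq_eq_sum_range {n N : ℕ} (hn : 1 ≤ n) (hN : 3 * n ≤ N) :
    pSeq n = ∑ i ∈ range N, pSeqTerm n i :=
  sum_subset (range_subset_range.mpr hN) fun i _ hi =>
    pSeqTerm_eq_zero hn (by simpa using hi)

def coeffTwo (n : ℤ) : ℤ :=
  729 * n * (1 + n) * (1 + 3 * n) * (2 + 3 * n) * (4 + 3 * n) * (5 + 3 * n) *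
    (148 + 870 * n + 1247 * n ^ 2)

def coeffOne (n : ℤ) : ℤ :=
  48 * n * (1 + 3 * n) * (2 + 3 * n) *
    (64845 + 611964 * n + 2158381 * n ^ 2 + 3177680 * n ^ 3 + 2083331 * n ^ 4 + 496306 * n ^ 5)

def coeffZero (n : ℤ) : ℤ :=
  448 * (-1 + 7 * n) * (1 + 7 * n) * (2 + 7 * n) * (3 + 7 * n) * (4 + 7 * n) * (5 + 7 * n) *
    (2265 + 3364 * n + 1247 * n ^ 2)

def clearingFactor (n : ℕ) : ℤ :=
  n * (n + 1) * ∏ t ∈ range 6, (3 * (n : ℤ) - 6 + t)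

theorem clearingFactor_ne_zero {n : ℕ} (hn : 3 ≤ n) : clearingFactor n ≠ 0 :=
  mul_ne_zero (by positivity) (prod_ne_zero_iff.mpr fun t _ => by omega)

def baseTerm (n i : ℕ) : ℤ :=
  (-2 : ℤ) ^ i * ((i + n - 1).choose (n - 1) : ℤ) * ((6 * n - 2 - i).choose (3 * n - 7) : ℤ)

section Relations

variable {n i : ℕ}

theorem baseTerm_succ (hn : 3 ≤ n) (hi : i ≤ 3 * n + 5) :
    ((i : ℤ) + 1) * (6 * n - 2 - i) * baseTerm n (i + 1) =
      -2 * (i + n) * (3 * n + 5 - i) * baseTerm n i := by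
  have hA := Nat.choose_mul_succ_eq (i + n - 1) (n - 1)
  have hB := Nat.choose_mul_succ_eq (6 * n - 3 - i) (3 * n - 7)
  rw [show i + n - 1 + 1 = i + n by omega, show i + n - (n - 1) = i + 1 by omega] at hA
  rw [show 6 * n - 3 - i + 1 = 6 * n - 2 - i by omega,
    show 6 * n - 2 - i - (3 * n - 7) = 3 * n + 5 - i by omega] at hB
  have hA' := congrArg (Nat.cast : ℕ → ℤ) hA
  have hB' := congrArg (Nat.cast : ℕ → ℤ) hB
  push_cast [show ((i + n - 1 : ℕ) : ℤ) = i + n - 1 by omega,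
    show ((6 * n - 2 - i : ℕ) : ℤ) = 6 * n - 2 - i by omega,
    show ((3 * n + 5 - i : ℕ) : ℤ) = 3 * n + 5 - i by omega] at hA' hB'
  simp only [baseTerm, show i + 1 + n - 1 = i + n by omega,
    show 6 * n - 2 - (i + 1) = 6 * n - 3 - i by omega]
  linear_combination
    2 * (-2 : ℤ) ^ i * (6 * n - 2 - i) * ((6 * n - 3 - i).choose (3 * n - 7) : ℤ) * hA' -
      2 * (-2 : ℤ) ^ i * (i + n) * ((i + n - 1).choose (n - 1) : ℤ) * hB'

theorem pSeqTerm_mul_eq (hn : 3 ≤ n) (hi : i ≤ 3 * n + 5) :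
    (∏ t ∈ range 6, (3 * (n : ℤ) - 6 + t)) * pSeqTerm n i =
      (∏ t ∈ range 6, (3 * (n : ℤ) + 5 - i - t)) * baseTerm n i := by
  have hB := Nat.cast_choose_add_mul_prod (R := ℤ) (6 * n - 2 - i) (3 * n - 7) 6
  rw [show 3 * n - 7 + 6 = 3 * n - 1 by omega,
    show ((6 * n - 2 - i : ℕ) : ℤ) = 6 * n - 2 - i by omega,
    show ((3 * n - 7 : ℕ) : ℤ) = 3 * n - 7 by omega] at hB
  simp only [pSeqTerm, baseTerm]
  linear_combination (norm := (simp only [prod_range_succ, prod_range_zero]; ring1))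
    (-2 : ℤ) ^ i * ((i + n - 1).choose (n - 1) : ℤ) * hB

theorem pSeqTerm_add_one_mul_eq (hn : 3 ≤ n) (hi : i ≤ 3 * n + 5) :
    (n * ∏ t ∈ range 9, (3 * (n : ℤ) - 6 + t)) * pSeqTerm (n + 1) i =
      ((i + n) * (∏ t ∈ range 6, (6 * (n : ℤ) - 1 - i + t)) *
        ∏ t ∈ range 3, (3 * (n : ℤ) + 5 - i - t)) * baseTerm n i := by
  have hA := Nat.cast_choose_add_add_mul_prod (R := ℤ) (i + n - 1) (n - 1) 1
  have hB₁ := Nat.cast_choose_add_add_mul_prod (R := ℤ) (6 * n - 2 - i) (3 * n - 7) 6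
  have hB₂ := Nat.cast_choose_add_mul_prod (R := ℤ) (6 * n + 4 - i) (3 * n - 1) 3
  rw [show i + n - 1 + 1 = i + n by omega, show n - 1 + 1 = n by omega,
    show ((i + n - 1 : ℕ) : ℤ) = i + n - 1 by omega, show ((n - 1 : ℕ) : ℤ) = n - 1 by omega] at hA
  rw [show 6 * n - 2 - i + 6 = 6 * n + 4 - i by omega, show 3 * n - 7 + 6 = 3 * n - 1 by omega,
    show ((6 * n - 2 - i : ℕ) : ℤ) = 6 * n - 2 - i by omega,
    show ((3 * n - 7 : ℕ) : ℤ) = 3 * n - 7 by omega] at hB₁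
  rw [show 3 * n - 1 + 3 = 3 * n + 2 by omega, show ((6 * n + 4 - i : ℕ) : ℤ) = 6 * n + 4 - i by omega,
    show ((3 * n - 1 : ℕ) : ℤ) = 3 * n - 1 by omega] at hB₂
  simp only [pSeqTerm, baseTerm, show i + (n + 1) - 1 = i + n by omega, Nat.add_sub_cancel,
    show 6 * (n + 1) - 2 - i = 6 * n + 4 - i by omega, show 3 * (n + 1) - 1 = 3 * n + 2 by omega]
  linear_combination (norm := (simp only [prod_range_succ, prod_range_zero]; ring1))
    (-2 : ℤ) ^ i * (∏ t ∈ range 9, (3 * (n : ℤ) - 6 + t)) *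
        ((6 * n + 4 - i).choose (3 * n + 2) : ℤ) * hA +
      (-2 : ℤ) ^ i * (i + n) * ((i + n - 1).choose (n - 1) : ℤ) *
        (∏ t ∈ range 6, (3 * (n : ℤ) - 6 + t)) * hB₂ +
      (-2 : ℤ) ^ i * (i + n) * ((i + n - 1).choose (n - 1) : ℤ) *
        (∏ t ∈ range 3, (3 * (n : ℤ) + 5 - i - t)) * hB₁

theorem pSeqTerm_add_two_mul_eq (hn : 3 ≤ n) (hi : i ≤ 3 * n + 5) :
    (n * (n + 1) * ∏ t ∈ range 12, (3 * (n : ℤ) - 6 + t)) * pSeqTerm (n + 2) i =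
      ((i + n) * (i + n + 1) * ∏ t ∈ range 12, (6 * (n : ℤ) - 1 - i + t)) * baseTerm n i := by
  have hA := Nat.cast_choose_add_add_mul_prod (R := ℤ) (i + n - 1) (n - 1) 2
  have hB := Nat.cast_choose_add_add_mul_prod (R := ℤ) (6 * n - 2 - i) (3 * n - 7) 12
  rw [show i + n - 1 + 2 = i + n + 1 by omega, show n - 1 + 2 = n + 1 by omega,
    show ((i + n - 1 : ℕ) : ℤ) = i + n - 1 by omega, show ((n - 1 : ℕ) : ℤ) = n - 1 by omega] at hA
  rw [show 6 * n - 2 - i + 12 = 6 * n + 10 - i by omega, show 3 * n - 7 + 12 = 3 * n + 5 by omega,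
    show ((6 * n - 2 - i : ℕ) : ℤ) = 6 * n - 2 - i by omega,
    show ((3 * n - 7 : ℕ) : ℤ) = 3 * n - 7 by omega] at hB
  simp only [pSeqTerm, baseTerm, show i + (n + 2) - 1 = i + n + 1 by omega,
    show n + 2 - 1 = n + 1 by omega, show 6 * (n + 2) - 2 - i = 6 * n + 10 - i by omega,
    show 3 * (n + 2) - 1 = 3 * n + 5 by omega]
  linear_combination (norm := (simp only [prod_range_succ, prod_range_zero]; ring1))
    (-2 : ℤ) ^ i * (∏ t ∈ range 12, (3 * (n : ℤ) - 6 + t)) *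
        ((6 * n + 10 - i).choose (3 * n + 5) : ℤ) * hA +
      (-2 : ℤ) ^ i * (i + n) * (i + n + 1) * ((i + n - 1).choose (n - 1) : ℤ) * hB

end Relations

def certificate (n i : ℤ) : ℤ :=
  (-49054464000 * n - 1337256138240 * n ^ 2 - 16097859288768 * n ^ 3
    - 113150546864832 * n ^ 4 - 518251194803808 * n ^ 5 - 1634908213954944 * n ^ 6
    - 3658997843072640 * n ^ 7 - 5889749008737312 * n ^ 8 - 6828022458696192 * n ^ 9
    - 5639159651396928 * n ^ 10 - 3230240248817568 * n ^ 11 - 1217477176005312 * n ^ 12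
    - 271115402844096 * n ^ 13 - 26992208889504 * n ^ 14) +
  (9393408000 + 270444614400 * n + 3418544509728 * n ^ 2 + 26030465071072 * n ^ 3
    + 134329417674096 * n ^ 4 + 492623195174400 * n ^ 5 + 1304676740411040 * n ^ 6
    + 2498905487589408 * n ^ 7 + 3436358323156368 * n ^ 8 + 3338785050886736 * n ^ 9
    + 2225878302633552 * n ^ 10 + 965041802091504 * n ^ 11 + 244333934019792 * n ^ 12
    + 27348555121056 * n ^ 13) * i +
  (-5570184960 + 63300443808 * n + 2367748923136 * n ^ 2 + 22256798776680 * n ^ 3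
    + 107717952411280 * n ^ 4 + 313264116062952 * n ^ 5 + 578409379210096 * n ^ 6
    + 683943818738016 * n ^ 7 + 499645806796704 * n ^ 8 + 198004568433816 * n ^ 9
    + 20357518095144 * n ^ 10 - 12471859413648 * n ^ 11 - 3431904872976 * n ^ 12) * i ^ 2 +
  (-30170803008 - 911862188768 * n - 10498075675680 * n ^ 2 - 64575896240836 * n ^ 3
    - 241762918029528 * n ^ 4 - 585812660797640 * n ^ 5 - 944552666628504 * n ^ 6
    - 1018609114453872 * n ^ 7 - 722687697022860 * n ^ 8 - 322149526275112 * n ^ 9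
    - 81348404702544 * n ^ 10 - 8821488453696 * n ^ 11) * i ^ 3 +
  (52334444736 + 1138792532688 * n + 10297058627544 * n ^ 2 + 51462738167262 * n ^ 3
    + 158321515218972 * n ^ 4 + 314440850195400 * n ^ 5 + 409530590333802 * n ^ 6
    + 346344591696144 * n ^ 7 + 182530760019948 * n ^ 8 + 54279684052104 * n ^ 9
    + 6934156198296 * n ^ 10) * i ^ 4 +
  (-38644443000 - 688813403952 * n - 5170345305768 * n ^ 2 - 21452489250719 * n ^ 3
    - 54235891644495 * n ^ 4 - 86699197142190 * n ^ 5 - 87738691396128 * n ^ 6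
    - 54299836104768 * n ^ 7 - 18689463099780 * n ^ 8 - 2732364219592 * n ^ 9) * i ^ 5 +
  (16315617060 + 246592006386 * n + 1558594546341 * n ^ 2 + 5365903446969 * n ^ 3
    + 10986689220843 * n ^ 4 + 13691200579152 * n ^ 5 + 10146335272068 * n ^ 6
    + 4094482513104 * n ^ 7 + 690298911924 * n ^ 8) * i ^ 6 +
  (-4325250024 - 56167172052 * n - 299033511666 * n ^ 2 - 843430188150 * n ^ 3
    - 1357868330502 * n ^ 4 - 1246720218228 * n ^ 5 - 604841336664 * n ^ 6
    - 119820997776 * n ^ 7) * i ^ 7 +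
  (744883668 + 8346401742 * n + 37099001939 * n ^ 2 + 83515255500 * n ^ 3
    + 100197231026 * n ^ 4 + 60727323792 * n ^ 5 + 14547699026 * n ^ 6) * i ^ 8 +
  (-83272200 - 804181768 * n - 2929224084 * n ^ 2 - 5017201327 * n ^ 3
    - 4035175971 * n ^ 4 - 1220975110 * n ^ 5) * i ^ 9 +
  (5827500 + 48241806 * n + 139356075 * n ^ 2 + 165117909 * n ^ 3 + 67768215 * n ^ 4) * i ^ 10 +
  (-231768 - 1628820 * n - 3518802 * n ^ 2 - 2244600 * n ^ 3) * i ^ 11 +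
  (3996 + 23490 * n + 33669 * n ^ 2) * i ^ 12

/- The coefficients `81 (148 + …)`, `16 (n+1) (64845 + …)` and `n (n+1) coeffZero n` are
`coeffTwo n`, `coeffOne n`, `coeffZero n` times `clearingFactor n`, divided by the left-hand factors
of `pSeqTerm_add_two_mul_eq`, `pSeqTerm_add_one_mul_eq` and `pSeqTerm_mul_eq` respectively. -/
theorem certificate_identity (n i : ℤ) :
    81 * (148 + 870 * n + 1247 * n ^ 2) *
        ((i + n) * (i + n + 1) * ∏ t ∈ range 12, (6 * n - 1 - i + t)) -
      16 * (n + 1) * (64845 + 611964 * n + 2158381 * n ^ 2 + 3177680 * n ^ 3 +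
          2083331 * n ^ 4 + 496306 * n ^ 5) *
        ((i + n) * (∏ t ∈ range 6, (6 * n - 1 - i + t)) * ∏ t ∈ range 3, (3 * n + 5 - i - t)) -
      n * (n + 1) * coeffZero n * ∏ t ∈ range 6, (3 * n + 5 - i - t) =
      -2 * (i + n) * (3 * n + 5 - i) * certificate n (i + 1) -
        i * (6 * n - 1 - i) * certificate n i := by
  simp only [prod_range_succ, prod_range_zero, certificate, coeffZero]
  ring

def antidifference (n i : ℕ) : ℤ :=
  certificate n i * i * (6 * (n : ℤ) - 1 - i) * baseTerm n i

theorem antidifference_zero (n : ℕ) : antidifference n 0 = 0 := by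
  simp [antidifference]

theorem antidifference_top {n : ℕ} (hn : 3 ≤ n) : antidifference n (3 * n + 6) = 0 := by
  simp [antidifference, baseTerm,
    Nat.choose_eq_zero_of_lt (show 6 * n - 2 - (3 * n + 6) < 3 * n - 7 by omega)]

theorem pSeqTerm_telescoping {n i : ℕ} (hn : 3 ≤ n) (hi : i ≤ 3 * n + 5) :
    clearingFactor n *
        (coeffTwo n * pSeqTerm (n + 2) i - coeffOne n * pSeqTerm (n + 1) i -
          coeffZero n * pSeqTerm n i) =
      antidifference n (i + 1) - antidifference n i := by
  have h₀ := pSeqTerm_mul_eq hn hi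
  have h₁ := pSeqTerm_add_one_mul_eq hn hi
  have h₂ := pSeqTerm_add_two_mul_eq hn hi
  have hS := baseTerm_succ hn hi
  have hQ := certificate_identity n i
  simp only [clearingFactor, antidifference, coeffTwo, coeffOne]
  push_cast
  linear_combination (norm := (simp only [prod_range_succ, prod_range_zero]; ring1))
    81 * (148 + 870 * (n : ℤ) + 1247 * n ^ 2) * h₂ -
      16 * ((n : ℤ) + 1) * (64845 + 611964 * (n : ℤ) + 2158381 * n ^ 2 + 3177680 * n ^ 3 +
        2083331 * n ^ 4 + 496306 * n ^ 5) * h₁ -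
      n * ((n : ℤ) + 1) * coeffZero n * h₀ - certificate n (i + 1) * hS + baseTerm n i * hQ

theorem pSeq_recurrence {n : ℕ} (hn : 3 ≤ n) :
    coeffTwo n * pSeq (n + 2) = coeffOne n * pSeq (n + 1) + coeffZero n * pSeq n := by
  have hsum : clearingFactor n *
      (coeffTwo n * pSeq (n + 2) - coeffOne n * pSeq (n + 1) - coeffZero n * pSeq n) = 0 := by
    rw [pSeq_eq_sum_range (n := n + 2) (N := 3 * n + 6) (by omega) (by omega),
      pSeq_eq_sum_range (n := n + 1) (N := 3 * n + 6) (by omega) (by omega),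
      pSeq_eq_sum_range (n := n) (N := 3 * n + 6) (by omega) (by omega),
      mul_sum, mul_sum, mul_sum, ← sum_sub_distrib, ← sum_sub_distrib, mul_sum,
      sum_congr rfl fun i hi => pSeqTerm_telescoping hn (by simp at hi; omega),
      sum_range_sub, antidifference_top hn, antidifference_zero, sub_zero]
  linear_combination (mul_eq_zero.mp hsum).resolve_left (clearingFactor_ne_zero hn)

theorem stmt_7 (n : ℕ) :
    (729 * n * (1 + n) * (1 + 3 * n) * (2 + 3 * n) * (4 + 3 * n) * (5 + 3 * n) *
        (148 + 870 * n + 1247 * n ^ 2) : ℤ) * pSeq (n + 2) =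
      (48 * n * (1 + 3 * n) * (2 + 3 * n) *
        (64845 + 611964 * n + 2158381 * n ^ 2 + 3177680 * n ^ 3 + 2083331 * n ^ 4 +
          496306 * n ^ 5) : ℤ) * pSeq (n + 1) +
      (448 * (-1 + 7 * (n : ℤ)) * (1 + 7 * n) * (2 + 7 * n) * (3 + 7 * n) * (4 + 7 * n) *
        (5 + 7 * n) * (2265 + 3364 * n + 1247 * n ^ 2)) * pSeq n := by
  rcases lt_or_ge n 3 with hn | hn
  · interval_cases n <;> decide
  · exact pSeq_recurrence hn
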